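/- Let G be a graph (instance of normal-play NimG-MR) and let G' be the graph obtained from G by attaching to each vertex of G a pendant path of three new vertices, each carrying exactly 1 token. Then for every starting vertex u of G, the normal-play outcome of NimG-MR on (G,u,w) equals the misère-play outcome of NimG-MR on (G',u,w'): in the misère game on G', moving out of G into one of the attached paths is always a losing move. -/
import Mathlib


universe u
mutual
  inductive GNormalWin {α : Type u} (moves : α → α → Prop) : α → Prop
    | step {p q : α} : moves p q → GNormalLose moves q → GNormalWin moves p
  inductive GNormalLose {α : Type u} (moves : α → α → Prop) : α → Prop
    | intro {p : α} : (∀ q, moves p q → GNormalWin moves q) → GNormalLose moves p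
end

mutual
  inductive GMisereWin {α : Type u} (moves : α → α → Prop) : α → Prop
    | terminal {p : α} : (∀ q, ¬ moves p q) → GMisereWin moves p
    | step {p q : α} : moves p q → GMisereLose moves q → GMisereWin moves p
  inductive GMisereLose {α : Type u} (moves : α → α → Prop) : α → Prop
    | intro {p q₀ : α} : moves p q₀ → (∀ q, moves p q → GMisereWin moves q) → GMisereLose moves p
end

def nimMove {V : Type u} (adj : V → V → Prop) (p q : V × (V → ℕ)) : Prop :=
  adj p.1 q.1 ∧ q.2 p.1 < p.2 p.1 ∧ ∀ v, v ≠ p.1 → q.2 v = p.2 v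

mutual
  inductive NimRMWin {V : Type u} (adj : V → V → Prop) : V × (V → ℕ) → Prop
    | zero {p} : p.2 p.1 = 0 → NimRMWin adj p
    | step {p q} : nimMove adj p q → NimRMLose adj q → NimRMWin adj p
  inductive NimRMLose {V : Type u} (adj : V → V → Prop) : V × (V → ℕ) → Prop
    | intro {p} : p.2 p.1 ≠ 0 → (∀ q, nimMove adj p q → NimRMWin adj q) → NimRMLose adj p
end

def vgMove {V : Type u} (A : V → V → Prop) (p q : Set V × V) : Prop :=
  A p.2 q.2 ∧ q.2 ∈ p.1 ∧ q.2 ≠ p.2 ∧ q.1 = p.1 \ {p.2}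

def addOut {V : Type u} (A : V → V → Prop) : V ⊕ V → V ⊕ V → Prop
  | .inl a, .inl b => A a b
  | .inl a, .inr b => a = b
  | _, _ => False

def MaxMatching {V : Type u} (G : SimpleGraph V) (M : G.Subgraph) : Prop :=
  M.IsMatching ∧ ∀ N : G.Subgraph, N.IsMatching → N.edgeSet.ncard ≤ M.edgeSet.ncard

/-- A move of NimG-MR: move the pointer to a neighbour, then remove at least one token there. -/
def nimMRMove {V : Type u} (adj : V → V → Prop) (p q : V × (V → ℕ)) : Prop :=
  adj p.1 q.1 ∧ q.2 q.1 < p.2 q.1 ∧ ∀ v, v ≠ q.1 → q.2 v = p.2 v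

/-- `G` with a pendant path of three fresh vertices attached to every vertex. -/
def pendant3 {V : Type u} (G : SimpleGraph V) : SimpleGraph (V ⊕ V × Fin 3) :=
  SimpleGraph.fromRel (fun x y => match x, y with
    | .inl a, .inl b => G.Adj a b
    | .inl a, .inr b => a = b.1 ∧ b.2 = 0
    | .inr a, .inr b => a.1 = b.1 ∧ (b.2 : ℕ) = (a.2 : ℕ) + 1
    | _, _ => False)

open Sum

lemma nimMR_total_lt {V : Type u} [Fintype V] {adj : V → V → Prop} {p q : V × (V → ℕ)}
    (h : nimMRMove adj p q) : (∑ v, q.2 v) < ∑ v, p.2 v := by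
  apply Finset.sum_lt_sum
  · intro i _
    by_cases hi : i = q.1
    · subst hi; exact le_of_lt h.2.1
    · rw [h.2.2 i hi]
  · exact ⟨q.1, Finset.mem_univ _, h.2.1⟩

lemma misere_not_both {V : Type u} [Fintype V] {adj : V → V → Prop} :
    ∀ (n : ℕ) (p : V × (V → ℕ)), (∑ v, p.2 v) ≤ n →
      GMisereWin (nimMRMove adj) p → GMisereLose (nimMRMove adj) p → False := by
  intro n
  induction n using Nat.strong_induction_on with
  | _ n IH =>
    intro p hp hw hl
    cases hw with
    | terminal h =>
      cases hl with
      | intro hm _ => exact h _ hm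
    | step hm hq =>
      cases hl with
      | intro _ hall =>
        exact IH _ (lt_of_lt_of_le (nimMR_total_lt hm) hp) _ le_rfl (hall _ hm) hq

lemma normal_det {V : Type u} [Fintype V] {adj : V → V → Prop} :
    ∀ (n : ℕ) (p : V × (V → ℕ)), (∑ v, p.2 v) ≤ n →
      GNormalWin (nimMRMove adj) p ∨ GNormalLose (nimMRMove adj) p := by
  intro n
  induction n using Nat.strong_induction_on with
  | _ n IH =>
    intro p hp
    by_cases h : ∃ q, nimMRMove adj p q ∧ GNormalLose (nimMRMove adj) q
    · obtain ⟨q, hm, hq⟩ := h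
      exact Or.inl (GNormalWin.step hm hq)
    · right
      refine GNormalLose.intro fun q hm => ?_
      rcases IH _ (lt_of_lt_of_le (nimMR_total_lt hm) hp) _ le_rfl with hw | hl
      · exact hw
      · exact absurd ⟨q, hm, hl⟩ h

lemma padj_inl_inl' {V : Type u} {G : SimpleGraph V} {a b : V} :
    (pendant3 G).Adj (inl a) (inl b) ↔ G.Adj a b := by
  simp only [pendant3, SimpleGraph.fromRel_adj]
  constructor
  · rintro ⟨-, h | h⟩
    · exact h
    · exact h.symm
  · intro h
    exact ⟨fun e => G.ne_of_adj h (Sum.inl_injective e), Or.inl h⟩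

lemma padj_inl_inr' {V : Type u} {G : SimpleGraph V} {a : V} {b : V × Fin 3} :
    (pendant3 G).Adj (inl a) (inr b) ↔ b = (a, 0) := by
  simp only [pendant3, SimpleGraph.fromRel_adj]
  constructor
  · rintro ⟨-, ⟨h1, h2⟩ | h⟩
    · exact Prod.ext h1.symm h2
    · exact absurd h (by simp)
  · rintro rfl
    exact ⟨by simp, Or.inl ⟨rfl, rfl⟩⟩

lemma padj_inr' {V : Type u} {G : SimpleGraph V} {a : V × Fin 3} {x : V ⊕ V × Fin 3} :
    (pendant3 G).Adj (inr a) x ↔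
      (x = inl a.1 ∧ a.2 = 0) ∨
      (∃ j : Fin 3, x = inr (a.1, j) ∧ ((j : ℕ) = a.2 + 1 ∨ (a.2 : ℕ) = j + 1)) := by
  constructor
  · intro h
    cases x with
    | inl b =>
      left
      have := ((pendant3 G).adj_symm h)
      rw [padj_inl_inr'] at this
      subst this
      exact ⟨rfl, rfl⟩
    | inr b =>
      right
      simp only [pendant3, SimpleGraph.fromRel_adj] at h
      rcases h with ⟨-, ⟨h1, h2⟩ | ⟨h1, h2⟩⟩
      · exact ⟨b.2, by rw [h1], Or.inl h2⟩
      · exact ⟨b.2, by rw [← h1], Or.inr h2⟩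
  · rintro (⟨rfl, h2⟩ | ⟨j, rfl, hj⟩)
    · obtain ⟨a1, a2⟩ := a
      cases h2
      exact (pendant3 G).adj_symm (padj_inl_inr'.mpr rfl)
    · simp only [pendant3, SimpleGraph.fromRel_adj]
      constructor
      · intro e
        rw [Sum.inr.injEq] at e
        have : a.2 = j := congrArg Prod.snd e.symm ▸ rfl
        omega
      · rcases hj with hj | hj
        · exact Or.inl ⟨trivial, hj⟩
        · exact Or.inr ⟨trivial, hj⟩

section pendantLemmas
variable {V : Type u} [Fintype V] {G : SimpleGraph V}

lemma winP2 {a : V} {W : V ⊕ V × Fin 3 → ℕ} (h1 : W (inr (a, 1)) = 0) :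
    GMisereWin (nimMRMove (pendant3 G).Adj) (inr (a, 2), W) := by
  apply GMisereWin.terminal
  rintro ⟨x, Wx⟩ ⟨hadj, hlt, -⟩
  rw [padj_inr'] at hadj
  rcases hadj with ⟨-, h⟩ | ⟨j, rfl, hj⟩
  · simp at h
  · have h2 : (((a, 2).snd : Fin 3) : ℕ) = 2 := rfl
    rw [h2] at hj
    have hjlt := j.isLt
    have : (j : ℕ) = 1 := by omega
    have : j = 1 := Fin.ext this
    subst this
    simp only at hlt
    omega

lemma loseP1 {a : V} {W : V ⊕ V × Fin 3 → ℕ} (h0 : W (inr (a, 0)) = 0)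
    (h1 : W (inr (a, 1)) = 0) (h2 : 0 < W (inr (a, 2))) :
    GMisereLose (nimMRMove (pendant3 G).Adj) (inr (a, 1), W) := by
  classical
  refine GMisereLose.intro (q₀ := (inr (a, 2), fun z => if z = inr (a, 2) then 0 else W z))
    ⟨?_, ?_, ?_⟩ ?_
  · exact padj_inr'.mpr (Or.inr ⟨2, rfl, Or.inl rfl⟩)
  · simpa using h2
  · intro v hv
    simp only at hv ⊢
    rw [if_neg hv]
  · rintro ⟨x, Wx⟩ ⟨hadj, hlt, hrest⟩
    rw [padj_inr'] at hadj
    rcases hadj with ⟨-, h⟩ | ⟨j, rfl, hj⟩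
    · simp at h
    · have hj1 : (((a, 1).snd : Fin 3) : ℕ) = 1 := rfl
      rw [hj1] at hj
      have hjlt := j.isLt
      rcases hj with hj | hj
      · have : j = 2 := Fin.ext (by omega)
        subst this
        refine winP2 ?_
        have := hrest (inr (a, 1)) (by simp)
        simp only at this
        exact this.trans h1
      · have : j = 0 := Fin.ext (by omega)
        subst this
        simp only at hlt
        omega

lemma winP0 {a : V} {W : V ⊕ V × Fin 3 → ℕ} (h0 : W (inr (a, 0)) = 0)
    (h1 : W (inr (a, 1)) = 1) (h2 : 0 < W (inr (a, 2))) :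
    GMisereWin (nimMRMove (pendant3 G).Adj) (inr (a, 0), W) := by
  classical
  refine GMisereWin.step (q := (inr (a, 1), fun z => if z = inr (a, 1) then 0 else W z))
    ⟨?_, ?_, ?_⟩ ?_
  · exact padj_inr'.mpr (Or.inr ⟨1, rfl, Or.inl rfl⟩)
  · simpa [h1] using Nat.zero_lt_one
  · intro v hv
    simp only at hv ⊢
    rw [if_neg hv]
  · refine loseP1 ?_ ?_ ?_
    · simpa using h0
    · simp
    · simpa using h2
end pendantLemmas

lemma main_ind {V : Type} [Fintype V] (G : SimpleGraph V) :
    ∀ (n : ℕ) (u : V) (w : V → ℕ), (∑ v, w v) ≤ n →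
      (GNormalWin (nimMRMove G.Adj) (u, w) →
        GMisereWin (nimMRMove (pendant3 G).Adj) (inl u, Sum.elim w fun _ => 1)) ∧
      (GNormalLose (nimMRMove G.Adj) (u, w) →
        GMisereLose (nimMRMove (pendant3 G).Adj) (inl u, Sum.elim w fun _ => 1)) := by
  intro n
  induction n using Nat.strong_induction_on with
  | _ n IH =>
    intro u w hn
    constructor
    · intro hw
      cases hw with
      | @step _ q hm hl =>
        obtain ⟨v, w'⟩ := q
        have hlt : (∑ x, w' x) < ∑ x, w x := nimMR_total_lt (adj := G.Adj) hm
        refine GMisereWin.step (q := (inl v, Sum.elim w' fun _ => 1)) ⟨?_, ?_, ?_⟩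
          ((IH _ (lt_of_lt_of_le hlt hn) v w' le_rfl).2 hl)
        · exact padj_inl_inl'.mpr hm.1
        · exact hm.2.1
        · intro x hx
          cases x with
          | inl v' => exact hm.2.2 v' (fun e => hx (congrArg inl e))
          | inr y => rfl
    · intro hl
      cases hl with
      | intro hall =>
        classical
        refine GMisereLose.intro
          (q₀ := (inr (u, 0), fun z => if z = inr (u, 0) then 0
            else Sum.elim w (fun _ => 1) z)) ⟨?_, ?_, ?_⟩ ?_
        · exact padj_inl_inr'.mpr rfl
        · simp
        · intro v hv
          simp only at hv ⊢
          rw [if_neg hv]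
        · rintro ⟨x, Wx⟩ ⟨hadj, hlt, hrest⟩
          cases x with
          | inr b =>
            have hb : b = (u, 0) := padj_inl_inr'.mp hadj
            subst hb
            refine winP0 ?_ ?_ ?_
            · simp only [Sum.elim_inr] at hlt
              omega
            · have := hrest (inr (u, 1)) (by simp)
              simp only [Sum.elim_inr] at this
              exact this
            · have := hrest (inr (u, 2)) (by simp)
              simp only [Sum.elim_inr] at this
              omega
          | inl v =>
            have hadj' : G.Adj u v := padj_inl_inl'.mp hadj
            have hWx : Wx = Sum.elim (fun v' => Wx (inl v')) fun _ => 1 := by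
              funext z
              cases z with
              | inl v' => rfl
              | inr y =>
                have := hrest (inr y) (by simp)
                simpa using this
            have hmove : nimMRMove G.Adj (u, w) (v, fun v' => Wx (inl v')) := by
              refine ⟨hadj', ?_, ?_⟩
              · simpa using hlt
              · intro v' hv'
                have := hrest (inl v') (fun e => hv' (Sum.inl_injective e))
                simpa using this
            have hwin := hall _ hmove
            have hlt2 : (∑ x, Wx (inl x)) < ∑ x, w x := nimMR_total_lt hmove
            have hm := (IH _ (lt_of_lt_of_le hlt2 hn) v _ le_rfl).1 hwin
            rw [hWx]
            exact hm


/-- NimG-MR: attaching to each vertex of `G` a pendant path of three fresh vertices each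
carrying one token turns the normal outcome into the misère outcome: the normal-play
NimG-MR position `(G,u,w)` is a first-player win iff the misère-play NimG-MR position
`(G',u,w')` is. -/
theorem stmt17 {V : Type} [Fintype V] (G : SimpleGraph V) (w : V → ℕ) (u : V) :
    GNormalWin (nimMRMove G.Adj) (u, w) ↔
      GMisereWin (nimMRMove (pendant3 G).Adj)
        (Sum.inl u, Sum.elim w (fun _ => 1)) := by
  constructor
  · exact fun h => (main_ind G (∑ v, w v) u w le_rfl).1 h
  · intro h
    rcases normal_det (adj := G.Adj) (∑ v, w v) (u, w) le_rfl with hw | hl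
    · exact hw
    · exact absurd ((main_ind G (∑ v, w v) u w le_rfl).2 hl)
        (fun hl' => misere_not_both _ _ le_rfl h hl')
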